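/- In any red/blue edge-coloring of the complete bipartite graph K_{n,n}, there is a monochromatic connected subgraph spanning at least n vertices if n is even, and at least n + 1 vertices if n is odd. -/
import Mathlib

open SimpleGraph Finset

namespace Stmt16Aux

variable {n : ℕ}

abbrev V (n : ℕ) := Fin n ⊕ Fin n

def inlE : Fin n ↪ V n := ⟨Sum.inl, Sum.inl_injective⟩
def inrE : Fin n ↪ V n := ⟨Sum.inr, Sum.inr_injective⟩

def G (c : Sym2 (V n) → Bool) (col : Bool) : SimpleGraph (V n) :=
  SimpleGraph.fromEdgeSet
    {e | e ∈ (completeBipartiteGraph (Fin n) (Fin n)).edgeSet ∧ c e = col}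

lemma G_adj {c : Sym2 (V n) → Bool} {col : Bool} {a b : Fin n}
    (h : c s(Sum.inl a, Sum.inr b) = col) :
    (G c col).Adj (Sum.inl a) (Sum.inr b) := by
  rw [G, SimpleGraph.fromEdgeSet_adj]
  exact ⟨⟨by simp [completeBipartiteGraph], h⟩, by simp⟩

lemma reach_of_adj {V'} {G : SimpleGraph V'} {s : Set V'} {u v : V'} (hu : u ∈ s) (hv : v ∈ s)
    (h : G.Adj u v) : (G.induce s).Reachable ⟨u, hu⟩ ⟨v, hv⟩ :=
  SimpleGraph.Adj.reachable (by exact h)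

lemma connected_of_hub {V'} (G : SimpleGraph V') (s : Set V') (h0 : V') (h0s : h0 ∈ s)
    (h : ∀ u (hu : u ∈ s), (G.induce s).Reachable ⟨u, hu⟩ ⟨h0, h0s⟩) :
    (G.induce s).Connected := by
  rw [SimpleGraph.connected_iff]
  refine ⟨?_, ⟨⟨h0, h0s⟩⟩⟩
  rintro ⟨u, hu⟩ ⟨v, hv⟩
  exact (h u hu).trans (h v hv).symm

def tset (X Y : Finset (Fin n)) : Finset (V n) := X.map inlE ∪ Y.map inrE

lemma card_tset (X Y : Finset (Fin n)) : (tset X Y).card = X.card + Y.card := by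
  rw [tset, Finset.card_union_of_disjoint, Finset.card_map, Finset.card_map]
  simp [Finset.disjoint_left, inlE, inrE]

lemma mem_tset {X Y : Finset (Fin n)} {u : V n} :
    u ∈ tset X Y ↔ (∃ a ∈ X, Sum.inl a = u) ∨ (∃ b ∈ Y, Sum.inr b = u) := by
  simp [tset, inlE, inrE]

lemma mem_tset_inl {X Y : Finset (Fin n)} {a : Fin n} (h : a ∈ X) :
    (Sum.inl a : V n) ∈ tset X Y := mem_tset.mpr (Or.inl ⟨a, h, rfl⟩)

lemma mem_tset_inr {X Y : Finset (Fin n)} {b : Fin n} (h : b ∈ Y) :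
    (Sum.inr b : V n) ∈ tset X Y := mem_tset.mpr (Or.inr ⟨b, h, rfl⟩)

/-- Monochromatic complete bipartite graph is connected. -/
lemma cbp_conn (c : Sym2 (V n) → Bool) (col : Bool) (X Y : Finset (Fin n))
    (hX : X.Nonempty) (hY : Y.Nonempty)
    (hall : ∀ a ∈ X, ∀ b ∈ Y, c s(Sum.inl a, Sum.inr b) = col) :
    ((G c col).induce ↑(tset X Y)).Connected := by
  obtain ⟨x, hx⟩ := hX; obtain ⟨y, hy⟩ := hY
  apply connected_of_hub _ _ (Sum.inr y) (Finset.mem_coe.mpr (mem_tset_inr hy))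
  intro u hu
  rcases mem_tset.mp (Finset.mem_coe.mp hu) with ⟨a, ha, rfl⟩ | ⟨b, hb, rfl⟩
  · exact reach_of_adj _ _ (G_adj (hall a ha y hy))
  · exact (reach_of_adj hu (Finset.mem_coe.mpr (mem_tset_inl hx))
      (G_adj (hall x hx b hb)).symm).trans
      (reach_of_adj _ _ (G_adj (hall x hx y hy)))

/-- Monochromatic double star is connected. -/
lemma dstar_conn (c : Sym2 (V n) → Bool) (col : Bool) (X Y : Finset (Fin n))
    (x0 y0 : Fin n) (hx0 : x0 ∈ X) (hy0 : y0 ∈ Y)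
    (hX : ∀ a ∈ X, c s(Sum.inl a, Sum.inr y0) = col)
    (hY : ∀ b ∈ Y, c s(Sum.inl x0, Sum.inr b) = col) :
    ((G c col).induce ↑(tset X Y)).Connected := by
  apply connected_of_hub _ _ (Sum.inr y0) (Finset.mem_coe.mpr (mem_tset_inr hy0))
  intro u hu
  rcases mem_tset.mp (Finset.mem_coe.mp hu) with ⟨a, ha, rfl⟩ | ⟨b, hb, rfl⟩
  · exact reach_of_adj _ _ (G_adj (hX a ha))
  · exact (reach_of_adj hu (Finset.mem_coe.mpr (mem_tset_inl hx0))
      (G_adj (hY b hb)).symm).trans (reach_of_adj _ _ (G_adj (hX x0 hx0)))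

/-- Double star with a pendant vertex on the B side. -/
lemma dstar_pendB_conn (c : Sym2 (V n) → Bool) (col : Bool) (X Y : Finset (Fin n))
    (x0 y0 : Fin n) (hx0 : x0 ∈ X) (hy0 : y0 ∈ Y)
    (hX : ∀ a ∈ X, c s(Sum.inl a, Sum.inr y0) = col)
    (hY : ∀ b ∈ Y, c s(Sum.inl x0, Sum.inr b) = col)
    (a1 b1 : Fin n) (ha1 : a1 ∈ X) (hab : c s(Sum.inl a1, Sum.inr b1) = col) :
    ((G c col).induce ↑(insert (Sum.inr b1) (tset X Y))).Connected := by
  have hhub : (Sum.inr y0 : V n) ∈ (↑(insert (Sum.inr b1) (tset X Y)) : Set (V n)) :=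
    Finset.mem_coe.mpr (Finset.mem_insert_of_mem (mem_tset_inr hy0))
  apply connected_of_hub _ _ (Sum.inr y0) hhub
  intro u hu
  have key : ∀ v (hv : v ∈ tset X Y),
      ((G c col).induce ↑(insert (Sum.inr b1) (tset X Y))).Reachable
        ⟨v, Finset.mem_coe.mpr (Finset.mem_insert_of_mem hv)⟩ ⟨Sum.inr y0, hhub⟩ := by
    intro v hv
    rcases mem_tset.mp hv with ⟨a, ha, rfl⟩ | ⟨b, hb, rfl⟩
    · exact reach_of_adj _ _ (G_adj (hX a ha))
    · exact (reach_of_adj _ (Finset.mem_coe.mpr (Finset.mem_insert_of_mem (mem_tset_inl hx0)))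
        (G_adj (hY b hb)).symm).trans (reach_of_adj _ _ (G_adj (hX x0 hx0)))
  rcases Finset.mem_insert.mp (Finset.mem_coe.mp hu) with rfl | hv
  · exact (reach_of_adj hu (Finset.mem_coe.mpr (Finset.mem_insert_of_mem (mem_tset_inl ha1)))
      (G_adj hab).symm).trans (key _ (mem_tset_inl ha1))
  · exact key u hv

/-- Double star with a pendant vertex on the A side. -/
lemma dstar_pendA_conn (c : Sym2 (V n) → Bool) (col : Bool) (X Y : Finset (Fin n))
    (x0 y0 : Fin n) (hx0 : x0 ∈ X) (hy0 : y0 ∈ Y)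
    (hX : ∀ a ∈ X, c s(Sum.inl a, Sum.inr y0) = col)
    (hY : ∀ b ∈ Y, c s(Sum.inl x0, Sum.inr b) = col)
    (a1 b1 : Fin n) (hb1 : b1 ∈ Y) (hab : c s(Sum.inl a1, Sum.inr b1) = col) :
    ((G c col).induce ↑(insert (Sum.inl a1) (tset X Y))).Connected := by
  have hhub : (Sum.inr y0 : V n) ∈ (↑(insert (Sum.inl a1) (tset X Y)) : Set (V n)) :=
    Finset.mem_coe.mpr (Finset.mem_insert_of_mem (mem_tset_inr hy0))
  apply connected_of_hub _ _ (Sum.inr y0) hhub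
  intro u hu
  have key : ∀ v (hv : v ∈ tset X Y),
      ((G c col).induce ↑(insert (Sum.inl a1) (tset X Y))).Reachable
        ⟨v, Finset.mem_coe.mpr (Finset.mem_insert_of_mem hv)⟩ ⟨Sum.inr y0, hhub⟩ := by
    intro v hv
    rcases mem_tset.mp hv with ⟨a, ha, rfl⟩ | ⟨b, hb, rfl⟩
    · exact reach_of_adj _ _ (G_adj (hX a ha))
    · exact (reach_of_adj _ (Finset.mem_coe.mpr (Finset.mem_insert_of_mem (mem_tset_inl hx0)))
        (G_adj (hY b hb)).symm).trans (reach_of_adj _ _ (G_adj (hX x0 hx0)))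
  rcases Finset.mem_insert.mp (Finset.mem_coe.mp hu) with rfl | hv
  · exact (reach_of_adj hu (Finset.mem_coe.mpr (Finset.mem_insert_of_mem (mem_tset_inr hb1)))
      (G_adj hab)).trans (key _ (mem_tset_inr hb1))
  · exact key u hv

/-- Two stars joined by a bridge edge. -/
lemma twostar_conn (c : Sym2 (V n) → Bool) (col : Bool) (X Y : Finset (Fin n))
    (x0 y0 : Fin n)
    (hX : ∀ a ∈ X, c s(Sum.inl a, Sum.inr y0) = col)
    (hY : ∀ b ∈ Y, c s(Sum.inl x0, Sum.inr b) = col)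
    (a1 b1 : Fin n) (ha1 : a1 ∈ X) (hb1 : b1 ∈ Y)
    (hab : c s(Sum.inl a1, Sum.inr b1) = col) :
    ((G c col).induce
      ↑(insert (Sum.inl x0) (insert (Sum.inr y0) (tset X Y)))).Connected := by
  set t : Finset (V n) := insert (Sum.inl x0) (insert (Sum.inr y0) (tset X Y)) with ht
  have hmx0 : (Sum.inl x0 : V n) ∈ (↑t : Set (V n)) :=
    Finset.mem_coe.mpr (Finset.mem_insert_self _ _)
  have hmy0 : (Sum.inr y0 : V n) ∈ (↑t : Set (V n)) :=
    Finset.mem_coe.mpr (Finset.mem_insert_of_mem (Finset.mem_insert_self _ _))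
  have hmem : ∀ v ∈ tset X Y, v ∈ (↑t : Set (V n)) := fun v hv =>
    Finset.mem_coe.mpr (Finset.mem_insert_of_mem (Finset.mem_insert_of_mem hv))
  apply connected_of_hub _ _ (Sum.inl x0) hmx0
  -- reach from y0 to x0: y0 - a1 - b1 - x0
  have ry0 : ((G c col).induce ↑t).Reachable ⟨Sum.inr y0, hmy0⟩ ⟨Sum.inl x0, hmx0⟩ :=
    ((reach_of_adj hmy0 (hmem _ (mem_tset_inl ha1)) (G_adj (hX a1 ha1)).symm).trans
      (reach_of_adj _ (hmem _ (mem_tset_inr hb1)) (G_adj hab))).trans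
      (reach_of_adj _ hmx0 (G_adj (hY b1 hb1)).symm)
  intro u hu
  rcases Finset.mem_insert.mp (Finset.mem_coe.mp hu) with rfl | hu'
  · exact SimpleGraph.Reachable.refl _
  rcases Finset.mem_insert.mp hu' with rfl | hu''
  · exact ry0
  rcases mem_tset.mp hu'' with ⟨a, ha, rfl⟩ | ⟨b, hb, rfl⟩
  · exact (reach_of_adj hu hmy0 (G_adj (hX a ha))).trans ry0
  · exact reach_of_adj hu hmx0 (G_adj (hY b hb)).symm



lemma bflip (b d : Bool) (h : ¬ b = d) : b = !d := by cases b <;> cases d <;> simp_all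

end Stmt16Aux

open Stmt16Aux

/-- In any red/blue (Bool) edge-coloring of K_{n,n}, there is a monochromatic
connected subgraph spanning at least n vertices if n is even and at least
n + 1 vertices if n is odd. -/
theorem stmt16 (n : ℕ) (hn : 1 ≤ n)
    (c : Sym2 (Fin n ⊕ Fin n) → Bool) :
    ∃ (col : Bool) (t : Finset (Fin n ⊕ Fin n)),
      (if Even n then n else n + 1) ≤ t.card ∧
      ((SimpleGraph.fromEdgeSet
          {e | e ∈ (completeBipartiteGraph (Fin n) (Fin n)).edgeSet ∧
               c e = col}).induce ↑t).Connected := by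
  classical
  set m := if Even n then n else n + 1 with hmdef
  have hm1 : m ≤ n + 1 := by rw [hmdef]; split <;> omega
  have hm2 : n ≤ m := by rw [hmdef]; split <;> omega
  set z : Fin n := ⟨0, hn⟩ with hzdef
  set col := c s(Sum.inl z, Sum.inr z) with hcoldef
  set Xr := Finset.univ.filter (fun a : Fin n => c s(Sum.inl a, Sum.inr z) = col) with hXrdef
  set Xb := Finset.univ.filter (fun a : Fin n => ¬ c s(Sum.inl a, Sum.inr z) = col) with hXbdef
  set Yr := Finset.univ.filter (fun b : Fin n => c s(Sum.inl z, Sum.inr b) = col) with hYrdef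
  set Yb := Finset.univ.filter (fun b : Fin n => ¬ c s(Sum.inl z, Sum.inr b) = col) with hYbdef
  have memXr : ∀ {a : Fin n}, a ∈ Xr ↔ c s(Sum.inl a, Sum.inr z) = col := by
    intro a; simp [hXrdef]
  have memXb : ∀ {a : Fin n}, a ∈ Xb ↔ ¬ c s(Sum.inl a, Sum.inr z) = col := by
    intro a; simp [hXbdef]
  have memYr : ∀ {b : Fin n}, b ∈ Yr ↔ c s(Sum.inl z, Sum.inr b) = col := by
    intro b; simp [hYrdef]
  have memYb : ∀ {b : Fin n}, b ∈ Yb ↔ ¬ c s(Sum.inl z, Sum.inr b) = col := by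
    intro b; simp [hYbdef]
  have hzXr : z ∈ Xr := memXr.mpr rfl
  have hzYr : z ∈ Yr := memYr.mpr rfl
  have hzXb : z ∉ Xb := fun h => (memXb.mp h) rfl
  have hzYb : z ∉ Yb := fun h => (memYb.mp h) rfl
  have hXsum : Xr.card + Xb.card = n := by
    have := Finset.card_filter_add_card_filter_not (s := (Finset.univ : Finset (Fin n)))
      (p := fun a => c s(Sum.inl a, Sum.inr z) = col)
    simpa [← hXrdef, ← hXbdef] using this
  have hYsum : Yr.card + Yb.card = n := by
    have := Finset.card_filter_add_card_filter_not (s := (Finset.univ : Finset (Fin n)))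
      (p := fun b => c s(Sum.inl z, Sum.inr b) = col)
    simpa [← hYrdef, ← hYbdef] using this
  have hXrpos : 1 ≤ Xr.card := Finset.card_pos.mpr ⟨z, hzXr⟩
  have hYrpos : 1 ≤ Yr.card := Finset.card_pos.mpr ⟨z, hzYr⟩
  by_cases h1 : m ≤ Xr.card + Yr.card
  · refine ⟨col, tset Xr Yr, ?_, ?_⟩
    · rw [card_tset]; omega
    · exact dstar_conn c col Xr Yr z z hzXr hzYr
        (fun a ha => memXr.mp ha) (fun b hb => memYr.mp hb)
  push_neg at h1
  have hXbpos : 1 ≤ Xb.card := by omega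
  have hYbpos : 1 ≤ Yb.card := by omega
  obtain ⟨xb, hxb⟩ := Finset.card_pos.mp hXbpos
  obtain ⟨yb, hyb⟩ := Finset.card_pos.mp hYbpos
  by_cases h2a : ∃ a ∈ Xb, ∃ b ∈ Yb, ¬ c s(Sum.inl a, Sum.inr b) = col
  · obtain ⟨a, ha, b, hb, hab⟩ := h2a
    refine ⟨!col, insert (Sum.inl z) (insert (Sum.inr z) (tset Xb Yb)), ?_, ?_⟩
    · have h1' : (Sum.inr z : Fin n ⊕ Fin n) ∉ tset Xb Yb := by
        rw [mem_tset]; simp [hzYb]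
      have h2' : (Sum.inl z : Fin n ⊕ Fin n) ∉ insert (Sum.inr z) (tset Xb Yb) := by
        rw [Finset.mem_insert, mem_tset]; simp [hzXb]
      rw [Finset.card_insert_of_notMem h2', Finset.card_insert_of_notMem h1', card_tset]
      omega
    · exact twostar_conn c (!col) Xb Yb z z
        (fun a ha => bflip _ _ (memXb.mp ha)) (fun b hb => bflip _ _ (memYb.mp hb))
        a b ha hb (bflip _ _ hab)
  push_neg at h2a
  by_cases h2 : m ≤ Xb.card + Yb.card
  · refine ⟨col, tset Xb Yb, ?_, ?_⟩
    · rw [card_tset]; omega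
    · exact cbp_conn c col Xb Yb ⟨xb, hxb⟩ ⟨yb, hyb⟩ h2a
  push_neg at h2
  have hmn : m = n + 1 := by omega
  have hS1 : Xr.card + Yr.card = n := by omega
  have hodd : n % 2 = 1 := by
    rcases Nat.even_or_odd n with he | ho
    · exfalso; rw [hmdef, if_pos he] at hmn; omega
    · exact Nat.odd_iff.mp ho
  by_cases hA : ∃ a ∈ Xr, ∃ b ∈ Yb, c s(Sum.inl a, Sum.inr b) = col
  · obtain ⟨a, ha, b, hb, hab⟩ := hA
    refine ⟨col, insert (Sum.inr b) (tset Xr Yr), ?_, ?_⟩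
    · have hbYr : b ∉ Yr := fun h => (memYb.mp hb) (memYr.mp h)
      have h1' : (Sum.inr b : Fin n ⊕ Fin n) ∉ tset Xr Yr := by
        rw [mem_tset]; simp [hbYr]
      rw [Finset.card_insert_of_notMem h1', card_tset]; omega
    · exact dstar_pendB_conn c col Xr Yr z z hzXr hzYr
        (fun a ha => memXr.mp ha) (fun b hb => memYr.mp hb) a b ha hab
  push_neg at hA
  by_cases hB : ∃ b ∈ Yr, ∃ a ∈ Xb, c s(Sum.inl a, Sum.inr b) = col
  · obtain ⟨b, hb, a, ha, hab⟩ := hB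
    refine ⟨col, insert (Sum.inl a) (tset Xr Yr), ?_, ?_⟩
    · have haXr : a ∉ Xr := fun h => (memXb.mp ha) (memXr.mp h)
      have h1' : (Sum.inl a : Fin n ⊕ Fin n) ∉ tset Xr Yr := by
        rw [mem_tset]; simp [haXr]
      rw [Finset.card_insert_of_notMem h1', card_tset]; omega
    · exact dstar_pendA_conn c col Xr Yr z z hzXr hzYr
        (fun a ha => memXr.mp ha) (fun b hb => memYr.mp hb) a b hb hab
  push_neg at hB
  by_cases h3 : m ≤ Xr.card + Yb.card
  · refine ⟨!col, tset Xr Yb, ?_, ?_⟩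
    · rw [card_tset]; omega
    · exact cbp_conn c (!col) Xr Yb ⟨z, hzXr⟩ ⟨yb, hyb⟩
        (fun a ha b hb => bflip _ _ (hA a ha b hb))
  push_neg at h3
  by_cases h4 : m ≤ Xb.card + Yr.card
  · refine ⟨!col, tset Xb Yr, ?_, ?_⟩
    · rw [card_tset]; omega
    · exact cbp_conn c (!col) Xb Yr ⟨xb, hxb⟩ ⟨z, hzYr⟩
        (fun a ha b hb => bflip _ _ (hB b hb a ha))
  push_neg at h4
  exfalso
  omega
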